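/- There exist 15 points p_1, …, p_15 in the unit square [0,1]^2 such that for every triple 1 ≤ i < j < k ≤ 15, the area of the triangle with vertices p_i, p_j, p_k, namely (1/2)·|det(p_j − p_i, p_k − p_i)|, is at least 0.0187493936. -/

import Mathlib

/-!
A configuration on the grid `(10⁻⁶ ℤ)²` suffices: scaling integer points by `1/N` scales every
determinant by `1/N²`, so the real bound reduces to a finite check of `C(15,3) = 455` integer
determinants.
-/

section Cross

variable {R S : Type*} [CommRing R] [CommRing S]

def cross (p q r : R × R) : R :=
  (q.1 - p.1) * (r.2 - p.2) - (q.2 - p.2) * (r.1 - p.1)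

lemma cross_smul (c : R) (p q r : R × R) :
    cross (c • p) (c • q) (c • r) = c ^ 2 * cross p q r := by
  simp only [cross, Prod.smul_fst, Prod.smul_snd, smul_eq_mul]
  ring

lemma map_cross (f : R →+* S) (p q r : R × R) :
    f (cross p q r) = cross (Prod.map f f p) (Prod.map f f q) (Prod.map f f r) := by
  simp only [cross, Prod.map_fst, Prod.map_snd, map_sub, map_mul]

end Cross

theorem exists_unitSquare_of_grid {ι : Type*} [LT ι] (P : ι → ℤ × ℤ) (N : ℕ) (hN : 0 < N)
    (D : ℤ) (hbox : ∀ i, (P i).1 ∈ Set.Icc 0 (N : ℤ) ∧ (P i).2 ∈ Set.Icc 0 (N : ℤ))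
    (hcross : ∀ i j k, i < j → j < k → D ≤ |cross (P i) (P j) (P k)|) :
    ∃ p : ι → ℝ × ℝ, (∀ i, (p i).1 ∈ Set.Icc (0 : ℝ) 1 ∧ (p i).2 ∈ Set.Icc (0 : ℝ) 1) ∧
      ∀ i j k, i < j → j < k → (D : ℝ) / N ^ 2 ≤ |cross (p i) (p j) (p k)| := by
  have hN' : (0 : ℝ) < N := by exact_mod_cast hN
  have scale_mem {a : ℤ} (ha : a ∈ Set.Icc 0 (N : ℤ)) : (N : ℝ)⁻¹ * a ∈ Set.Icc (0 : ℝ) 1 := by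
    obtain ⟨h0, h1⟩ := ha
    rw [inv_mul_eq_div, Set.mem_Icc, le_div_iff₀ hN', div_le_one hN']
    exact ⟨by simpa using h0, by exact_mod_cast h1⟩
  let castP (i : ι) : ℝ × ℝ := Prod.map (Int.castRingHom ℝ) (Int.castRingHom ℝ) (P i)
  refine ⟨fun i => (N : ℝ)⁻¹ • castP i, fun i => ⟨scale_mem (hbox i).1, scale_mem (hbox i).2⟩, ?_⟩
  intro i j k hij hjk
  have hD : (D : ℝ) ≤ |cross (castP i) (castP j) (castP k)| := by
    rw [← map_cross, eq_intCast, ← Int.cast_abs]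
    exact_mod_cast hcross i j k hij hjk
  rw [cross_smul, abs_mul, abs_of_nonneg (by positivity), inv_pow, inv_mul_eq_div]
  gcongr

/-- The points, in units of `10⁻⁶`. -/
def heilbronnGrid15 : Fin 15 → ℤ × ℤ :=
  ![(117379, 556574), (685622, 1000000), (0, 191905), (0, 894413), (411892, 445619),
    (361687, 182594), (999205, 356150), (656157, 484792), (734731, 45), (55901, 0),
    (885519, 56975), (96934, 1000000), (887554, 932498), (1000000, 698122), (345167, 865689)]

lemma heilbronnGrid15_mem_box (i : Fin 15) :
    (heilbronnGrid15 i).1 ∈ Set.Icc 0 1000000 ∧ (heilbronnGrid15 i).2 ∈ Set.Icc 0 1000000 := by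
  revert i
  decide

lemma heilbronnGrid15_le_abs_cross :
    ∀ i j k : Fin 15, i < j → j < k →
      37498787200 ≤ |cross (heilbronnGrid15 i) (heilbronnGrid15 j) (heilbronnGrid15 k)| := by
  decide

/-- Heilbronn configuration of 15 points with minimum triangle area at least 0.0187493936. -/
theorem heilbronn_15 : ∃ p : Fin 15 → ℝ × ℝ,
    (∀ i, (p i).1 ∈ Set.Icc (0:ℝ) 1 ∧ (p i).2 ∈ Set.Icc (0:ℝ) 1) ∧
    ∀ i j k : Fin 15, i < j → j < k →
      (0.0187493936 : ℝ) ≤ (1/2) * |((p j).1 - (p i).1) * ((p k).2 - (p i).2)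
        - ((p j).2 - (p i).2) * ((p k).1 - (p i).1)| := by
  obtain ⟨p, hbox, hcross⟩ := exists_unitSquare_of_grid heilbronnGrid15 1000000 (by norm_num)
    37498787200 heilbronnGrid15_mem_box heilbronnGrid15_le_abs_cross
  refine ⟨p, hbox, fun i j k hij hjk => ?_⟩
  show _ ≤ 1 / 2 * |cross (p i) (p j) (p k)|
  linarith [hcross i j k hij hjk]
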